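/- Let G be a finitely generated torsion-free group and H a finite-index subgroup of G. If H is periodically rigid, then G is periodically rigid. -/

import Mathlib

section SymbolicDynamics

variable {G : Type} [Group G] {A : Type}

/-- The left shift action of `G` on configurations `G → A`: `(g · x) h = x (g⁻¹ h)`. -/
def shiftAct (g : G) (x : G → A) : G → A := fun h => x (g⁻¹ * h)

/-- A pattern: a finite support together with a map assigning letters. -/
abbrev Pattern (G A : Type) := Finset G × (G → A)

/-- A pattern `p` appears in a configuration `x` if some translate of `x` agrees with `p`
on its support. -/
def Appears (p : Pattern G A) (x : G → A) : Prop :=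
  ∃ g : G, ∀ h ∈ p.1, x (g * h) = p.2 h

/-- The set of configurations avoiding every pattern in `𝓕`. -/
def shiftSpace (𝓕 : Set (Pattern G A)) : Set (G → A) :=
  {x | ∀ p ∈ 𝓕, ¬ Appears p x}

/-- A subshift: a set of configurations defined by a set of forbidden patterns. -/
def IsSubshift (X : Set (G → A)) : Prop :=
  ∃ 𝓕 : Set (Pattern G A), X = shiftSpace 𝓕

/-- A subshift of finite type: defined by a finite set of forbidden patterns. -/
def IsSFT (X : Set (G → A)) : Prop :=
  ∃ 𝓕 : Set (Pattern G A), 𝓕.Finite ∧ X = shiftSpace 𝓕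

/-- The stabilizer of a configuration under the shift action. -/
def stab (x : G → A) : Subgroup G where
  carrier := {g | shiftAct g x = x}
  one_mem' := by
    show shiftAct 1 x = x
    funext h; simp [shiftAct]
  mul_mem' := by
    intro a b ha hb
    have ha' : shiftAct a x = x := ha
    have hb' : shiftAct b x = x := hb
    show shiftAct (a * b) x = x
    funext h
    have h1 := congrFun hb' (a⁻¹ * h)
    have h2 := congrFun ha' h
    simp only [shiftAct] at h1 h2 ⊢
    rw [show (a * b)⁻¹ * h = b⁻¹ * (a⁻¹ * h) by rw [mul_inv_rev, mul_assoc], h1, h2]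
  inv_mem' := by
    intro a ha
    have ha' : shiftAct a x = x := ha
    show shiftAct a⁻¹ x = x
    funext h
    have h1 := congrFun ha' (a * h)
    simp only [shiftAct] at h1 ⊢
    simp only [inv_inv]
    rw [← h1, inv_mul_cancel_left]

/-- The orbit of a configuration under the shift action. -/
def orbitSet (x : G → A) : Set (G → A) := Set.range fun g => shiftAct g x

/-- A subshift is weakly aperiodic if every configuration has an infinite orbit. -/
def WeaklyAperiodic (X : Set (G → A)) : Prop := ∀ x ∈ X, (orbitSet x).Infinite

/-- A subshift is strongly aperiodic if every configuration has trivial stabilizer. -/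
def StronglyAperiodic (X : Set (G → A)) : Prop := ∀ x ∈ X, stab x = ⊥

/-- A family of subgroups of `G` is realizable if it is the set of stabilizers of a
nonempty `G`-SFT over some nonempty finite alphabet. -/
def Realizable (𝒢 : Set (Subgroup G)) : Prop :=
  ∃ (A : Type) (_ : Finite A) (_ : Nonempty A) (X : Set (G → A)),
    IsSFT X ∧ X.Nonempty ∧ stab '' X = 𝒢

end SymbolicDynamics

/-- A group is periodically rigid if every nonempty weakly aperiodic SFT on it is
strongly aperiodic. -/
def PeriodicallyRigid (G : Type) [Group G] : Prop :=
  ∀ (A : Type) (_ : Finite A) (_ : Nonempty A) (X : Set (G → A)),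
    IsSFT X → X.Nonempty → WeaklyAperiodic X → StronglyAperiodic X

/-- A group is virtually `ℤ` if it has a finite-index subgroup isomorphic to `ℤ`. -/
def VirtuallyZ (G : Type) [Group G] : Prop :=
  ∃ H : Subgroup G, H.FiniteIndex ∧ Nonempty (H ≃* Multiplicative ℤ)

/-- A group is virtually `ℤ²` if it has a finite-index subgroup isomorphic to `ℤ²`. -/
def VirtuallyZ2 (G : Type) [Group G] : Prop :=
  ∃ H : Subgroup G, H.FiniteIndex ∧ Nonempty (H ≃* Multiplicative (ℤ × ℤ))

/-- Old Mathlib's `Monoid.IsTorsionFree` (removed since), restored with its old definition. -/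
def Monoid.IsTorsionFree (G : Type*) [Monoid G] : Prop :=
  ∀ g : G, g ≠ 1 → ¬IsOfFinOrder g


section Statement13Aux

open scoped Classical

variable {G : Type} [Group G] {A : Type}

lemma shiftAct_mul' (a b : G) (x : G → A) :
    shiftAct (a * b) x = shiftAct a (shiftAct b x) := by
  funext h; simp [shiftAct, mul_assoc]

lemma shiftAct_one' (x : G → A) : shiftAct (1 : G) x = x := by
  funext h; simp [shiftAct]

lemma mem_stab_iff {g : G} {x : G → A} : g ∈ stab x ↔ shiftAct g x = x := Iff.rfl

lemma shift_eq_iff (a b : G) (x : G → A) :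
    shiftAct a x = shiftAct b x ↔ a⁻¹ * b ∈ stab x := by
  constructor
  · intro h
    show shiftAct (a⁻¹ * b) x = x
    rw [shiftAct_mul', ← h, ← shiftAct_mul', inv_mul_cancel, shiftAct_one']
  · intro h
    have h' : shiftAct (a⁻¹ * b) x = x := h
    calc shiftAct a x = shiftAct a (shiftAct (a⁻¹ * b) x) := by rw [h']
    _ = shiftAct (a * (a⁻¹ * b)) x := (shiftAct_mul' _ _ _).symm
    _ = shiftAct b x := by rw [mul_inv_cancel_left]

variable (H : Subgroup G)

/-- Representative of the right coset indexed by the left coset `c`. -/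
noncomputable def tauF (c : G ⧸ H) : G := (Quotient.out c)⁻¹

lemma coset_inv_mul (h : G) (hh : h ∈ H) (w : G) :
    (((h * w)⁻¹ : G) : G ⧸ H) = ((w⁻¹ : G) : G ⧸ H) := by
  refine QuotientGroup.eq.mpr ?_
  simpa using hh

noncomputable def hpartG (g : G) : G := g * Quotient.out ((g⁻¹ : G) : G ⧸ H)

lemma hpartG_mem (g : G) : hpartG H g ∈ H := by
  have h1 : ((Quotient.out ((g⁻¹ : G) : G ⧸ H) : G) : G ⧸ H) = ((g⁻¹ : G) : G ⧸ H) :=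
    QuotientGroup.out_eq' _
  have := QuotientGroup.eq.mp h1.symm
  simpa [hpartG] using this

lemma hpart_decomp (g : G) : hpartG H g * tauF H ((g⁻¹ : G) : G ⧸ H) = g := by
  simp [hpartG, tauF, mul_assoc]

lemma hpartG_mul (h g : G) (hh : h ∈ H) : hpartG H (h * g) = h * hpartG H g := by
  unfold hpartG
  rw [mul_inv_rev, show ((g⁻¹ * h⁻¹ : G) : G ⧸ H) = ((g⁻¹ : G) : G ⧸ H) by
    simpa using coset_inv_mul H h hh g, mul_assoc]

lemma hpartG_tau (c : G ⧸ H) : hpartG H (tauF H c) = 1 := by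
  unfold hpartG tauF
  rw [inv_inv, QuotientGroup.out_eq', inv_mul_cancel]

noncomputable def hpartSub (g : G) : ↥H := ⟨hpartG H g, hpartG_mem H g⟩

noncomputable def PhiMap (x : G → A) : ↥H → ((G ⧸ H) → A) :=
  fun h c => x (↑h * tauF H c)

noncomputable def PsiMap (y : ↥H → ((G ⧸ H) → A)) : G → A :=
  fun g => y (hpartSub H g) ((g⁻¹ : G) : G ⧸ H)

lemma hpartSub_mul (h : ↥H) (w : G) :
    hpartSub H ((h : G) * w) = h * hpartSub H w := by
  apply Subtype.ext
  simp [hpartSub, hpartG_mul H _ w h.2]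

lemma psi_eval (y : ↥H → ((G ⧸ H) → A)) (h₀ : ↥H) (w : G) :
    PsiMap H y ((h₀ : G) * w) = y (h₀ * hpartSub H w) ((w⁻¹ : G) : G ⧸ H) := by
  unfold PsiMap
  rw [hpartSub_mul, coset_inv_mul H _ h₀.2]

lemma Psi_Phi (x : G → A) : PsiMap H (PhiMap H x) = x := by
  funext g
  show PhiMap H x (hpartSub H g) _ = x g
  unfold PhiMap hpartSub
  rw [hpart_decomp]

lemma Phi_Psi (y : ↥H → ((G ⧸ H) → A)) : PhiMap H (PsiMap H y) = y := by
  funext h c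
  show PsiMap H y ((h : G) * tauF H c) = y h c
  rw [psi_eval]
  have e1 : hpartSub H (tauF H c) = 1 := Subtype.ext (hpartG_tau H c)
  have e2 : (((tauF H c)⁻¹ : G) : G ⧸ H) = c := by
    unfold tauF; rw [inv_inv, QuotientGroup.out_eq']
  rw [e1, mul_one, e2]

lemma Phi_injective : Function.Injective (PhiMap (A := A) H) :=
  Function.LeftInverse.injective (Psi_Phi H)

lemma Phi_equivariant (h' : ↥H) (x : G → A) :
    PhiMap H (shiftAct (↑h') x) = shiftAct h' (PhiMap H x) := by
  funext h c
  show shiftAct (↑h') x ((h : G) * tauF H c) = PhiMap H x (h'⁻¹ * h) c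
  unfold shiftAct PhiMap
  rw [Subgroup.coe_mul, Subgroup.coe_inv, mul_assoc]

end Statement13Aux
section Statement13Aux2

open scoped Classical

variable {G : Type} [Group G] {A : Type} (H : Subgroup G)

/-- Support of the lifted pattern. -/
noncomputable def FcSet (p : Pattern G A) (c : G ⧸ H) : Finset ↥H :=
  p.1.image (fun f => hpartSub H (tauF H c * f))

/-- The lifted family of forbidden patterns over the subgroup. -/
noncomputable def liftPat (𝓕 : Set (Pattern G A)) (a₀ : A) :
    Set (Pattern ↥H ((G ⧸ H) → A)) :=
  ⋃ p ∈ 𝓕, ⋃ c : G ⧸ H,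
    {q | q.1 = FcSet H p c ∧
      (∀ f ∈ p.1,
        q.2 (hpartSub H (tauF H c * f)) (((tauF H c * f)⁻¹ : G) : G ⧸ H) = p.2 f) ∧
      (∀ h ∉ q.1, q.2 h = fun _ => a₀)}

lemma pattern_set_finite {H' B : Type} [Finite B] (F : Finset H') (P : Pattern H' B → Prop)
    (d : B) : {q : Pattern H' B | q.1 = F ∧ P q ∧ ∀ h ∉ q.1, q.2 h = d}.Finite := by
  classical
  have hsub : {q : Pattern H' B | q.1 = F ∧ P q ∧ ∀ h ∉ q.1, q.2 h = d} ⊆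
      {q : Pattern H' B | q.1 = F ∧ ∀ h ∉ F, q.2 h = d} := by
    rintro q ⟨h1, _, h3⟩
    exact ⟨h1, fun h hh => h3 h (h1 ▸ hh)⟩
  refine Set.Finite.subset ?_ hsub
  have hinj : Set.InjOn (fun q : Pattern H' B => fun h : ↥F => q.2 ↑h)
      {q : Pattern H' B | q.1 = F ∧ ∀ h ∉ F, q.2 h = d} := by
    rintro q ⟨hq1, hq2⟩ q' ⟨hq1', hq2'⟩ heq
    refine Prod.ext (hq1.trans hq1'.symm) ?_
    funext h
    by_cases hF : h ∈ F
    · exact congrFun heq ⟨h, hF⟩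
    · rw [hq2 h hF, hq2' h hF]
  exact Set.Finite.of_finite_image (Set.toFinite _) hinj

lemma liftPat_finite [Finite (G ⧸ H)] [Finite A] {𝓕 : Set (Pattern G A)}
    (hf : 𝓕.Finite) (a₀ : A) : (liftPat H 𝓕 a₀).Finite := by
  refine Set.Finite.biUnion hf fun p _ => Set.finite_iUnion fun c => ?_
  exact pattern_set_finite (FcSet H p c) _ _

/-- Key evaluation identity used on both directions. -/
lemma psi_pattern_eval (y : ↥H → ((G ⧸ H) → A)) (h₀ : ↥H) (c : G ⧸ H) (f : G) :
    PsiMap H y ((h₀ : G) * tauF H c * f) =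
      y (h₀ * hpartSub H (tauF H c * f)) (((tauF H c * f)⁻¹ : G) : G ⧸ H) := by
  rw [mul_assoc, psi_eval]

lemma mem_lift_iff (𝓕 : Set (Pattern G A)) (a₀ : A) (y : ↥H → ((G ⧸ H) → A)) :
    y ∈ shiftSpace (liftPat H 𝓕 a₀) ↔ PsiMap H y ∈ shiftSpace 𝓕 := by
  classical
  constructor
  · -- contrapositive
    intro hy
    intro p hp hap
    obtain ⟨g, hg⟩ := hap
    set c : G ⧸ H := ((g⁻¹ : G) : G ⧸ H) with hc
    set h₀ : ↥H := hpartSub H g with hh₀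
    have hgdec : (h₀ : G) * tauF H c = g := hpart_decomp H g
    set F : Finset ↥H := FcSet H p c with hF
    set u : ↥H → ((G ⧸ H) → A) :=
      fun h => if h ∈ F then y (h₀ * h) else fun _ => a₀ with hu
    have hq : (F, u) ∈ liftPat H 𝓕 a₀ := by
      refine Set.mem_biUnion hp ?_
      refine Set.mem_iUnion.mpr ⟨c, ?_⟩
      refine ⟨rfl, ?_, ?_⟩
      · intro f hf
        have hmem : hpartSub H (tauF H c * f) ∈ F :=
          Finset.mem_image.mpr ⟨f, hf, rfl⟩
        show u _ _ = p.2 f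
        rw [hu]
        simp only [hmem, if_pos]
        rw [← psi_pattern_eval H y h₀ c f, hgdec]
        exact hg f hf
      · intro h hh
        show u h = fun _ => a₀
        rw [hu]; simp [hh]
    refine hy (F, u) hq ⟨h₀, ?_⟩
    intro h hhF
    show y (h₀ * h) = u h
    rw [hu]; simp [hhF]
  · intro hx
    intro q hq hap
    obtain ⟨p, hp, hrest⟩ := Set.mem_iUnion₂.mp hq
    obtain ⟨c, hqc⟩ := Set.mem_iUnion.mp hrest
    obtain ⟨hq1, hq2, _⟩ := hqc
    obtain ⟨h₀, hh₀⟩ := hap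
    refine hx p hp ⟨(h₀ : G) * tauF H c, ?_⟩
    intro f hf
    rw [psi_pattern_eval H y h₀ c f]
    have hmem : hpartSub H (tauF H c * f) ∈ q.1 :=
      hq1 ▸ Finset.mem_image.mpr ⟨f, hf, rfl⟩
    rw [hh₀ _ hmem]
    exact hq2 f hf

end Statement13Aux2
section Statement13Aux3

variable {G : Type} [Group G] {A : Type} (H : Subgroup G)

/-- If the `H`-orbit of `x` is finite, then the stabilizer has finite index in `G`. -/
lemma stab_finiteIndex_of_finite_Horbit [Finite (G ⧸ H)] (x : G → A)
    (hfin : (Set.range fun h : ↥H => shiftAct (↑h) x).Finite) :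
    (stab x).index ≠ 0 := by
  -- First, the quotient of H by the relative stabilizer is finite.
  set S : Subgroup ↥H := (stab x).subgroupOf H with hS
  haveI : Finite ↥(Set.range fun h : ↥H => shiftAct (↑h) x) := hfin.to_subtype
  have hinj : Function.Injective
      (fun q : ↥H ⧸ S => (⟨shiftAct (↑(Quotient.out q)) x, ⟨_, rfl⟩⟩ :
        ↥(Set.range fun h : ↥H => shiftAct (↑h) x))) := by
    intro q q' heq
    have heq' : shiftAct (↑(Quotient.out q)) x = shiftAct (↑(Quotient.out q')) x :=
      congrArg Subtype.val heq
    have hmem : (Quotient.out q)⁻¹ * Quotient.out q' ∈ S := by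
      show (↑((Quotient.out q)⁻¹ * Quotient.out q') : G) ∈ stab x
      have := (shift_eq_iff (↑(Quotient.out q)) (↑(Quotient.out q')) x).mp heq'
      simpa using this
    calc q = QuotientGroup.mk (Quotient.out q) := (QuotientGroup.out_eq' q).symm
    _ = QuotientGroup.mk (Quotient.out q') := QuotientGroup.eq.mpr hmem
    _ = q' := QuotientGroup.out_eq' q'
  haveI : Finite (↥H ⧸ S) := Finite.of_injective _ hinj
  have hSind : S.index ≠ 0 := Subgroup.index_ne_zero_of_finite
  have hHind : H.index ≠ 0 := Subgroup.index_ne_zero_of_finite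
  have hrel : (stab x).relIndex H ≠ 0 := hSind
  have hinf : ((stab x ⊓ H).relIndex H) ≠ 0 := by
    rwa [Subgroup.inf_relIndex_right]
  have hK : (stab x ⊓ H).index ≠ 0 := by
    have := Subgroup.relIndex_mul_index (inf_le_right : stab x ⊓ H ≤ H)
    intro h0
    rw [h0] at this
    exact mul_ne_zero hinf hHind this
  have hdvd : (stab x).index ∣ (stab x ⊓ H).index :=
    Subgroup.index_dvd_of_le inf_le_left
  exact fun h0 => hK (by
    obtain ⟨k, hk⟩ := hdvd
    rw [hk, h0, zero_mul])

/-- If the stabilizer has finite index, the full orbit is finite. -/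
lemma orbit_finite_of_index_ne_zero (x : G → A) (hi : (stab x).index ≠ 0) :
    (orbitSet x).Finite := by
  haveI : (stab x).FiniteIndex := ⟨hi⟩
  haveI : Finite (G ⧸ stab x) := Subgroup.finite_quotient_of_finiteIndex
  have hsub : orbitSet x ⊆
      Set.range (fun q : G ⧸ stab x => shiftAct (Quotient.out q) x) := by
    rintro _ ⟨g, rfl⟩
    refine ⟨QuotientGroup.mk g, ?_⟩
    have hmem : (Quotient.out (QuotientGroup.mk g : G ⧸ stab x))⁻¹ * g ∈ stab x := by
      have := QuotientGroup.out_eq' (QuotientGroup.mk g : G ⧸ stab x)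
      exact QuotientGroup.eq.mp this
    exact (shift_eq_iff _ _ x).mpr hmem
  exact Set.Finite.subset (Set.finite_range _) hsub

/-- Weak aperiodicity transfer: infinite `G`-orbit gives infinite `H`-orbit. -/
lemma Horbit_infinite [Finite (G ⧸ H)] (x : G → A) (hx : (orbitSet x).Infinite) :
    (Set.range fun h : ↥H => shiftAct (↑h) x).Infinite := by
  intro hfin
  exact hx (orbit_finite_of_index_ne_zero x
    (stab_finiteIndex_of_finite_Horbit H x hfin))

end Statement13Aux3
/-- If a finitely generated torsion-free group has a periodically rigid
finite-index subgroup, then it is periodically rigid. -/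
theorem statement13 {G : Type} [Group G] [Group.FG G]
    (htf : Monoid.IsTorsionFree G) (H : Subgroup G) [H.FiniteIndex]
    (hH : PeriodicallyRigid H) : PeriodicallyRigid G := by
  intro A _ _ X hSFT hne hwa
  obtain ⟨𝓕, h𝓕fin, rfl⟩ := hSFT
  haveI : Finite (G ⧸ H) := Subgroup.finite_quotient_of_finiteIndex
  obtain ⟨a₀⟩ := (inferInstance : Nonempty A)
  set B := (G ⧸ H) → A with hB
  set X' : Set (↥H → B) := shiftSpace (liftPat H 𝓕 a₀) with hX'
  -- X' is a nonempty weakly aperiodic SFT over H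
  have hX'sft : IsSFT X' := ⟨liftPat H 𝓕 a₀, liftPat_finite H h𝓕fin a₀, rfl⟩
  have hX'ne : X'.Nonempty := by
    obtain ⟨x₀, hx₀⟩ := hne
    refine ⟨PhiMap H x₀, ?_⟩
    rw [hX', mem_lift_iff, Psi_Phi]
    exact hx₀
  have hX'wa : WeaklyAperiodic X' := by
    intro y hy
    have hx : PsiMap H y ∈ shiftSpace 𝓕 := (mem_lift_iff H 𝓕 a₀ y).mp hy
    have hxinf : (orbitSet (PsiMap H y)).Infinite := hwa _ hx
    have hHinf := Horbit_infinite H (PsiMap H y) hxinf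
    have himg : orbitSet y =
        PhiMap H '' (Set.range fun h : ↥H => shiftAct (↑h) (PsiMap H y)) := by
      rw [orbitSet]
      ext z
      constructor
      · rintro ⟨h, rfl⟩
        exact ⟨shiftAct (↑h) (PsiMap H y), ⟨h, rfl⟩, by
          rw [Phi_equivariant, Phi_Psi]⟩
      · rintro ⟨_, ⟨h, rfl⟩, rfl⟩
        exact ⟨h, by rw [Phi_equivariant, Phi_Psi]⟩
    rw [himg]
    exact Set.Infinite.image (Function.Injective.injOn (Phi_injective H)) hHinf
  have hsa : StronglyAperiodic X' := hH B inferInstance inferInstance X' hX'sft hX'ne hX'wa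
  -- conclude strong aperiodicity of X
  intro x hx
  have hPhix : PhiMap H x ∈ X' := by
    rw [hX', mem_lift_iff, Psi_Phi]; exact hx
  have hstabPhi : stab (PhiMap H x) = ⊥ := hsa _ hPhix
  -- the stabilizer of x meets H trivially, hence it is finite
  have hmeet : ∀ h : ↥H, (↑h : G) ∈ stab x → h = 1 := by
    intro h hh
    have : shiftAct h (PhiMap H x) = PhiMap H x := by
      rw [← Phi_equivariant]
      exact congrArg (PhiMap H) hh
    have hmem : h ∈ stab (PhiMap H x) := this
    rw [hstabPhi] at hmem
    exact Subgroup.mem_bot.mp hmem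
  have hfin : Finite ↥(stab x) := by
    have hinj : Function.Injective
        (fun k : ↥(stab x) => (QuotientGroup.mk (↑k : G) : G ⧸ H)) := by
      intro k k' heq
      have hmem : (↑k : G)⁻¹ * ↑k' ∈ H := QuotientGroup.eq.mp heq
      have hstabm : (↑k : G)⁻¹ * ↑k' ∈ stab x := mul_mem (inv_mem k.2) k'.2
      have := hmeet ⟨_, hmem⟩ hstabm
      have h1 : (↑k : G)⁻¹ * ↑k' = 1 := congrArg Subtype.val this
      exact Subtype.ext (by
        have := inv_mul_eq_one.mp h1
        exact this)
    exact Finite.of_injective _ hinj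
  -- torsion-freeness: finite stabilizer must be trivial
  rw [eq_bot_iff]
  intro g hg
  rw [Subgroup.mem_bot]
  by_contra hg1
  refine htf g hg1 ?_
  have : IsOfFinOrder (⟨g, hg⟩ : ↥(stab x)) := isOfFinOrder_of_finite _
  have := MonoidHom.isOfFinOrder (stab x).subtype this
  simpa using this
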